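/- arXiv:0709.4133 — 6 statements merged into one kernel-verified Lean document; each statement's English description precedes it below -/
import Mathlib

section
/- Let s ∈ ℝ be a transcendental number. If A ⊆ ℝ² is a set whose distance set satisfies Δ(A) ⊆ {n + s : n ∈ ℕ}, then A has at most 3 elements. -/
/-!
Place the fourth point at the origin. The Gram matrix of the other three points, written through
polarization `2⟪x, y⟫ = ‖x‖² + ‖y‖² - ‖x - y‖²` in the six squared distances, is singular because
three vectors in the plane are dependent. If every distance is `qᵢⱼ + s` with `qᵢⱼ ∈ ℚ`, its
determinant is a rational polynomial in `s` of degree `6` with leading coefficient `4`, so `s` is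
algebraic.
-/

open Polynomial Matrix Module

theorem Matrix.det_gram_eq_zero_of_finrank_lt {𝕜 E ι : Type*} [RCLike 𝕜] [NormedAddCommGroup E]
    [InnerProductSpace 𝕜 E] [FiniteDimensional 𝕜 E] [Fintype ι] [DecidableEq ι] (v : ι → E)
    (h : finrank 𝕜 E < Fintype.card ι) : (gram 𝕜 v).det = 0 := by
  by_contra hdet
  exact h.not_ge (det_gram_ne_zero_iff_linearIndependent.mp hdet).fintype_card_le_finrank

def polarizedGram {R ι : Type*} [CommRing R] (a : ι → R) (b : ι → ι → R) : Matrix ι ι R :=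
  of fun i j => a i + a j - b i j

section Geometry

variable {E ι : Type*} [NormedAddCommGroup E] [InnerProductSpace ℝ E]

theorem polarizedGram_dist_sq (v : ι → E) (o : E) :
    polarizedGram (fun i => dist (v i) o ^ 2) (fun i j => dist (v i) (v j) ^ 2) =
      (2 : ℝ) • gram ℝ (fun i => v i - o) := by
  ext i j
  have h := norm_sub_sq_real (v i - o) (v j - o)
  rw [sub_sub_sub_cancel_right] at h
  simp only [polarizedGram, gram, Matrix.smul_apply, of_apply, smul_eq_mul, dist_eq_norm]
  linarith

theorem det_polarizedGram_dist_sq_eq_zero [FiniteDimensional ℝ E] [Fintype ι] [DecidableEq ι]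
    (hE : finrank ℝ E < Fintype.card ι) (v : ι → E) (o : E) :
    (polarizedGram (fun i => dist (v i) o ^ 2) (fun i j => dist (v i) (v j) ^ 2)).det = 0 := by
  rw [polarizedGram_dist_sq, det_smul, det_gram_eq_zero_of_finrank_lt _ hE, mul_zero]

end Geometry

/-- The diagonal is `0`, matching `dist x x = 0` rather than the shifted form `q i i + X`. -/
noncomputable def shiftedDist (q : Fin 4 → Fin 4 → ℚ) (i j : Fin 4) : ℚ[X] :=
  if i = j then 0 else C (q i j) + X

noncomputable def shiftedGramPoly (q : Fin 4 → Fin 4 → ℚ) : ℚ[X] :=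
  (polarizedGram (fun i : Fin 3 => shiftedDist q i.castSucc 3 ^ 2)
    (fun i j => shiftedDist q i.castSucc j.castSucc ^ 2)).det

theorem shiftedGramPoly_coeff_six (q : Fin 4 → Fin 4 → ℚ) : (shiftedGramPoly q).coeff 6 = 4 := by
  -- the `X ^ 6`-coefficient is `det !![2, 1, 1; 1, 2, 1; 1, 1, 2] = 4`
  simp only [shiftedGramPoly, det_fin_three, polarizedGram, shiftedDist, of_apply,
    Fin.reduceCastSucc, Fin.reduceEq, ↓reduceIte]
  compute_degree!

theorem aeval_shiftedDist {M : Type*} [PseudoMetricSpace M] {s : ℝ} {p : Fin 4 → M}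
    {q : Fin 4 → Fin 4 → ℚ} (hq : ∀ i j, i ≠ j → dist (p i) (p j) = q i j + s) (i j : Fin 4) :
    aeval s (shiftedDist q i j) = dist (p i) (p j) := by
  by_cases hij : i = j
  · simp [shiftedDist, hij]
  · simp [shiftedDist, hij, hq i j hij]

theorem isAlgebraic_of_dist_mem_rat_add {E : Type*} [NormedAddCommGroup E] [InnerProductSpace ℝ E]
    [FiniteDimensional ℝ E] (hE : finrank ℝ E ≤ 2) {s : ℝ} (p : Fin 4 → E)
    (hp : ∀ i j, i ≠ j → ∃ q : ℚ, dist (p i) (p j) = q + s) : IsAlgebraic ℚ s := by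
  choose! q hq using hp
  have hcoeff := shiftedGramPoly_coeff_six q
  refine ⟨shiftedGramPoly q, fun h => by simp [h] at hcoeff, ?_⟩
  rw [shiftedGramPoly, AlgHom.map_det]
  convert det_polarizedGram_dist_sq_eq_zero (by simpa using hE.trans_lt (by norm_num))
    (fun i : Fin 3 => p i.castSucc) (p 3) using 2
  ext i j
  simp [polarizedGram, aeval_shiftedDist hq]

/-- **Shifted Erdős–Solymosi theorem, transcendental shift.**
If `s` is transcendental over `ℚ` and all pairwise distances between distinct
points of `A ⊆ ℝ²` lie in `{n + s : n ∈ ℕ}`, then `A` has at most 3 elements. -/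
theorem distance_set_shift_transcendental (s : ℝ) (hs : Transcendental ℚ s)
    (A : Set (EuclideanSpace ℝ (Fin 2)))
    (hA : ∀ a ∈ A, ∀ a' ∈ A, a ≠ a' → ∃ n : ℕ, dist a a' = (n : ℝ) + s) :
    A.Finite ∧ A.ncard ≤ 3 := by
  rw [← Set.encard_le_coe_iff_finite_ncard_le]
  by_contra! h3
  have hA4 : (4 : ℕ∞) ≤ A.encard := Order.add_one_le_of_lt h3
  obtain ⟨p, -⟩ := Fin.Embedding.exists_embedding_disjoint_range_of_add_le_ENat_card
    (α := A) (s := ∅) (n := 4) (by simpa using hA4)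
  refine hs (isAlgebraic_of_dist_mem_rat_add finrank_euclideanSpace_fin.le (fun i => p i)
    fun i j hij => ?_)
  obtain ⟨n, hn⟩ := hA _ (p i).2 _ (p j).2 (Subtype.coe_injective.ne (p.injective.ne hij))
  exact ⟨n, by exact_mod_cast hn⟩
end

section
/- Let s ∈ ℚ be a rational number that is neither an integer nor a half-integer (i.e. 2s ∉ ℤ). If A ⊆ ℝ² is a set whose distance set satisfies Δ(A) ⊆ {n + s : n ∈ ℕ}, then A has at most 3 elements. -/
/-!
Four points in the plane span a degenerate tetrahedron, so their squared distances annihilate the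
Cayley–Menger polynomial, a cubic form with integer coefficients. If every distance is `n + s`
with `s = p / q` in lowest terms, then the distances scaled by `q` are integers congruent to `p`
modulo `q`, and reducing the Cayley–Menger relation modulo `q` leaves `2 p⁶ ≡ 0`. Hence `q ∣ 2`,
i.e. `2s ∈ ℤ`.
-/

/-- Half the Cayley–Menger determinant of four points, in the squared distances
`d₁₂², d₁₃², d₁₄², d₂₃², d₂₄², d₃₄²`; it equals `144 V²` for a tetrahedron of volume `V`. -/
def cayleyMenger {R : Type*} [CommRing R] (u v w x y z : R) : R :=
  -u^2*z - u*v*x + u*v*y + u*v*z + u*w*x - u*w*y + u*w*z + u*x*z + u*y*z - u*z^2 - v^2*y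
    + v*w*x + v*w*y - v*w*z + v*x*y - v*y^2 + v*y*z - w^2*x - w*x^2 + w*x*y + w*x*z - x*y*z

section CayleyMenger

variable {R S : Type*} [CommRing R] [CommRing S]

theorem map_cayleyMenger (f : R →+* S) (u v w x y z : R) :
    f (cayleyMenger u v w x y z) = cayleyMenger (f u) (f v) (f w) (f x) (f y) (f z) := by
  simp only [cayleyMenger, map_add, map_sub, map_neg, map_mul, map_pow]

theorem cayleyMenger_self (u : R) : cayleyMenger u u u u u u = 2 * u ^ 3 := by
  simp only [cayleyMenger]; ring

theorem cayleyMenger_mul_left (c u v w x y z : R) :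
    cayleyMenger (c * u) (c * v) (c * w) (c * x) (c * y) (c * z) =
      c ^ 3 * cayleyMenger u v w x y z := by
  simp only [cayleyMenger]; ring

end CayleyMenger

theorem cayleyMenger_dist_eq_zero (p₁ p₂ p₃ p₄ : EuclideanSpace ℝ (Fin 2)) :
    cayleyMenger (dist p₁ p₂ ^ 2) (dist p₁ p₃ ^ 2) (dist p₁ p₄ ^ 2)
      (dist p₂ p₃ ^ 2) (dist p₂ p₄ ^ 2) (dist p₃ p₄ ^ 2) = 0 := by
  simp only [EuclideanSpace.dist_sq_eq, Fin.sum_univ_two, Real.dist_eq, sq_abs, cayleyMenger]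
  ring

theorem dvd_two_mul_pow_six_of_cayleyMenger_eq_zero {q : ℕ} {p a b c d e f : ℤ}
    (h : cayleyMenger ((q * a + p) ^ 2) ((q * b + p) ^ 2) ((q * c + p) ^ 2)
      ((q * d + p) ^ 2) ((q * e + p) ^ 2) ((q * f + p) ^ 2) = 0) :
    (q : ℤ) ∣ 2 * p ^ 6 := by
  rw [← ZMod.intCast_zmod_eq_zero_iff_dvd]
  have hmod := congrArg (Int.castRingHom (ZMod q)) h
  rw [map_cayleyMenger, map_zero] at hmod
  simp only [map_pow, map_add, map_mul, map_natCast, ZMod.natCast_self, zero_mul, zero_add,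
    cayleyMenger_self, eq_intCast] at hmod
  push_cast
  linear_combination hmod

theorem Rat.den_dvd_two_of_dist_eq_int_add {s : ℚ} {p₁ p₂ p₃ p₄ : EuclideanSpace ℝ (Fin 2)}
    {a b c d e f : ℤ} (h₁₂ : dist p₁ p₂ = a + s) (h₁₃ : dist p₁ p₃ = b + s)
    (h₁₄ : dist p₁ p₄ = c + s) (h₂₃ : dist p₂ p₃ = d + s) (h₂₄ : dist p₂ p₄ = e + s)
    (h₃₄ : dist p₃ p₄ = f + s) : s.den ∣ 2 := by
  have hscale (n : ℤ) : ((s.den * n + s.num : ℤ) : ℝ) = s.den * (n + s) := by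
    have : (s.den : ℝ) * s = s.num := by rw [mul_comm]; exact_mod_cast Rat.mul_den_eq_num s
    push_cast; rw [mul_add, this]
  have hℝ := cayleyMenger_dist_eq_zero p₁ p₂ p₃ p₄
  rw [h₁₂, h₁₃, h₁₄, h₂₃, h₂₄, h₃₄] at hℝ
  have hℤ : cayleyMenger ((s.den * a + s.num) ^ 2) ((s.den * b + s.num) ^ 2)
      ((s.den * c + s.num) ^ 2) ((s.den * d + s.num) ^ 2) ((s.den * e + s.num) ^ 2)
      ((s.den * f + s.num) ^ 2) = 0 := by
    apply Int.cast_injective (α := ℝ)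
    rw [← eq_intCast (Int.castRingHom ℝ), map_cayleyMenger, Int.cast_zero]
    simp only [map_pow, eq_intCast, hscale, mul_pow, cayleyMenger_mul_left, hℝ, mul_zero]
  have hdvd := Int.natAbs_dvd_natAbs.mpr (dvd_two_mul_pow_six_of_cayleyMenger_eq_zero hℤ)
  rw [Int.natAbs_mul, Int.natAbs_pow, Int.natAbs_natCast] at hdvd
  exact (s.reduced.symm.pow_right 6).dvd_of_dvd_mul_right hdvd

theorem Rat.exists_int_two_mul_eq_of_den_dvd_two {s : ℚ} (h : s.den ∣ 2) :
    ∃ m : ℤ, 2 * s = m := by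
  obtain ⟨k, hk⟩ := h
  refine ⟨k * s.num, ?_⟩
  push_cast
  rw [← Rat.mul_den_eq_num, show (2 : ℚ) = (s.den * k : ℕ) by rw [← hk]; rfl]
  push_cast; ring

/-- **Shifted Erdős–Solymosi theorem, rational non-half-integer shift.**
If `s` is a rational number with `2s ∉ ℤ` and all pairwise distances between
distinct points of `A ⊆ ℝ²` lie in `{n + s : n ∈ ℕ}`, then `A` has at most
3 elements. -/
theorem distance_set_shift_rational (s : ℚ) (hs : ∀ m : ℤ, 2 * s ≠ (m : ℚ))
    (A : Set (EuclideanSpace ℝ (Fin 2)))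
    (hA : ∀ a ∈ A, ∀ a' ∈ A, a ≠ a' → ∃ n : ℕ, dist a a' = (n : ℝ) + (s : ℝ)) :
    A.Finite ∧ A.ncard ≤ 3 := by
  have hAℤ : ∀ a ∈ A, ∀ a' ∈ A, a ≠ a' → ∃ n : ℤ, dist a a' = n + s := fun a ha a' ha' h ↦
    let ⟨n, hn⟩ := hA a ha a' ha' h; ⟨n, by exact_mod_cast hn⟩
  rw [← Set.encard_le_coe_iff_finite_ncard_le]
  by_contra! h3
  obtain ⟨t, htA, ht⟩ := Set.exists_subset_encard_eq (Order.add_one_le_of_lt h3)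
  obtain ⟨p₁, p₂, p₃, p₄, h₁₂, h₁₃, h₁₄, h₂₃, h₂₄, h₃₄, rfl⟩ := Set.encard_eq_four.mp ht
  simp only [Set.insert_subset_iff, Set.singleton_subset_iff] at htA
  obtain ⟨hp₁, hp₂, hp₃, hp₄⟩ := htA
  obtain ⟨a, ha⟩ := hAℤ _ hp₁ _ hp₂ h₁₂
  obtain ⟨b, hb⟩ := hAℤ _ hp₁ _ hp₃ h₁₃
  obtain ⟨c, hc⟩ := hAℤ _ hp₁ _ hp₄ h₁₄
  obtain ⟨d, hd⟩ := hAℤ _ hp₂ _ hp₃ h₂₃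
  obtain ⟨e, he⟩ := hAℤ _ hp₂ _ hp₄ h₂₄
  obtain ⟨f, hf⟩ := hAℤ _ hp₃ _ hp₄ h₃₄
  obtain ⟨m, hm⟩ := Rat.exists_int_two_mul_eq_of_den_dvd_two
    (Rat.den_dvd_two_of_dist_eq_int_add ha hb hc hd he hf)
  exact hs m hm
end

section
/- If s ∈ ℝ is algebraic over ℚ of degree at least 9 (its minimal polynomial over ℚ has degree ≥ 9), then 8s⁸ ∉ Λ(s). Consequently, if A ⊆ ℝ² has distance set Δ(A) ⊆ {n + s : n ∈ ℕ}, then A has at most 3 elements. -/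
/-!
Both parts come from one principle: if the minimal polynomial of `s` over `ℚ` has degree at
least `9`, then `s` is not a root of a nonzero rational polynomial of degree at most `8`.

If `8s⁸ ∈ Λ(s)`, then `8X⁸ - p` with `p` of degree at most `7` would be such a polynomial.

Four distinct points of the plane with all six distances of the form `n + s` would give another
one: the Gram determinant of the three difference vectors issuing from one of the points vanishes,
since three vectors in `ℝ²` are linearly dependent, and written through the squared distances
`(n + s)²` this determinant is a rational polynomial in `s` with leading term `4s⁶`.
-/

/-- The set `Λ(s) = ℤ + 4sℤ + 2s²ℤ + 4s³ℤ + s⁴ℤ + 2s⁵ℤ + 2s⁶ℤ + 4s⁷ℤ`. -/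
def Lambda (s : ℝ) : Set ℝ :=
  {x | ∃ n₀ n₁ n₂ n₃ n₄ n₅ n₆ n₇ : ℤ,
    x = (n₀ : ℝ) + 4 * n₁ * s + 2 * n₂ * s ^ 2 + 4 * n₃ * s ^ 3 + n₄ * s ^ 4
      + 2 * n₅ * s ^ 5 + 2 * n₆ * s ^ 6 + 4 * n₇ * s ^ 7}

open Polynomial Module

section Minpoly

variable {K A : Type*} [Field K] [Ring A] [Algebra K A] {x : A}

theorem natDegree_minpoly_le_of_aeval_eq_zero {p : K[X]} (hp : p ≠ 0) (hx : aeval x p = 0) :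
    (minpoly K x).natDegree ≤ p.natDegree :=
  natDegree_le_natDegree (minpoly.degree_le_of_ne_zero K x hp hx)

theorem algebraMap_mul_pow_ne_aeval {n : ℕ} (hn : n < (minpoly K x).natDegree) {c : K}
    (hc : c ≠ 0) {p : K[X]} (hp : p.natDegree < n) : algebraMap K A c * x ^ n ≠ aeval x p := by
  intro h
  have hdeg : (C c * X ^ n - p).natDegree = n := by
    rw [natDegree_sub_eq_left_of_natDegree_lt (by rwa [natDegree_C_mul_X_pow n c hc]),
      natDegree_C_mul_X_pow n c hc]
  have hroot : aeval x (C c * X ^ n - p) = 0 := by simp [h]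
  have := natDegree_minpoly_le_of_aeval_eq_zero
    (ne_zero_of_natDegree_gt (n := p.natDegree) (by omega)) hroot
  omega

end Minpoly

theorem exists_natDegree_lt_aeval_eq_of_mem_Lambda {s x : ℝ} (hx : x ∈ Lambda s) :
    ∃ p : ℚ[X], p.natDegree < 8 ∧ aeval s p = x := by
  obtain ⟨n₀, n₁, n₂, n₃, n₄, n₅, n₆, n₇, rfl⟩ := hx
  refine ⟨C (n₀ : ℚ) + C (4 * n₁ : ℚ) * X + C (2 * n₂ : ℚ) * X ^ 2 + C (4 * n₃ : ℚ) * X ^ 3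
    + C (n₄ : ℚ) * X ^ 4 + C (2 * n₅ : ℚ) * X ^ 5 + C (2 * n₆ : ℚ) * X ^ 6
    + C (4 * n₇ : ℚ) * X ^ 7, Nat.lt_succ_of_le (by compute_degree), by simp⟩

section SqDistGram

variable {R : Type*} [CommRing R]

/-- Twice the Gram matrix of `p₁ - p₀, p₂ - p₀, p₃ - p₀`, in terms of the squared distances
`xᵢⱼ = |pᵢ - pⱼ|²`. -/
def sqDistGram (x01 x02 x03 x12 x13 x23 : R) : Matrix (Fin 3) (Fin 3) R :=
  !![2 * x01, x01 + x02 - x12, x01 + x03 - x13;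
    x01 + x02 - x12, 2 * x02, x02 + x03 - x23;
    x01 + x03 - x13, x02 + x03 - x23, 2 * x03]

theorem map_det_sqDistGram {S F : Type*} [CommRing S] [FunLike F R S] [RingHomClass F R S]
    (f : F) (x01 x02 x03 x12 x13 x23 : R) :
    f (sqDistGram x01 x02 x03 x12 x13 x23).det =
      (sqDistGram (f x01) (f x02) (f x03) (f x12) (f x13) (f x23)).det := by
  simp [sqDistGram, Matrix.det_fin_three, map_ofNat]

theorem natDegree_det_sqDistGram_C_add_X_sq [CharZero R] [NoZeroDivisors R]
    (q01 q02 q03 q12 q13 q23 : R) :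
    (sqDistGram ((C q01 + X) ^ 2) ((C q02 + X) ^ 2) ((C q03 + X) ^ 2) ((C q12 + X) ^ 2)
      ((C q13 + X) ^ 2) ((C q23 + X) ^ 2)).det.natDegree = 6 := by
  simp only [sqDistGram, Matrix.det_fin_three, Matrix.of_apply, Matrix.cons_val',
    Matrix.cons_val_zero, Matrix.cons_val_one, Matrix.cons_val_two, Matrix.empty_val',
    Matrix.cons_val_fin_one, Matrix.head_cons, Matrix.tail_cons, Matrix.head_fin_const]
  compute_degree!

end SqDistGram

section InnerProductSpace

variable {E : Type*} [NormedAddCommGroup E] [InnerProductSpace ℝ E]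

theorem dist_sq_add_dist_sq_sub_dist_sq (a b c : E) :
    dist a b ^ 2 + dist a c ^ 2 - dist b c ^ 2 = 2 * inner ℝ (b - a) (c - a) := by
  have hbc : b - c = (b - a) - (c - a) := by abel
  rw [dist_comm a b, dist_comm a c, dist_eq_norm, dist_eq_norm, dist_eq_norm, hbc,
    norm_sub_sq_real (b - a) (c - a)]
  ring

theorem sqDistGram_dist_sq (p0 p1 p2 p3 : E) :
    sqDistGram (dist p0 p1 ^ 2) (dist p0 p2 ^ 2) (dist p0 p3 ^ 2) (dist p1 p2 ^ 2)
      (dist p1 p3 ^ 2) (dist p2 p3 ^ 2) = (2 : ℝ) • Matrix.gram ℝ ![p1 - p0, p2 - p0, p3 - p0] := by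
  ext i j
  fin_cases i <;> fin_cases j <;>
    simp only [sqDistGram, Matrix.of_apply, Matrix.cons_val', Matrix.cons_val_zero,
      Matrix.cons_val_one, Matrix.cons_val, Matrix.cons_val_fin_one, Fin.isValue, Fin.zero_eta,
      Fin.mk_one, Fin.reduceFinMk, Matrix.smul_apply, Matrix.gram_apply, smul_eq_mul] <;>
    first
    | exact dist_sq_add_dist_sq_sub_dist_sq ..
    | rw [real_inner_comm]; exact dist_sq_add_dist_sq_sub_dist_sq ..
    | rw [← dist_sq_add_dist_sq_sub_dist_sq, dist_self]; ring

theorem det_sqDistGram_dist_sq_eq_zero [FiniteDimensional ℝ E] (hE : finrank ℝ E ≤ 2)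
    (p0 p1 p2 p3 : E) :
    (sqDistGram (dist p0 p1 ^ 2) (dist p0 p2 ^ 2) (dist p0 p3 ^ 2) (dist p1 p2 ^ 2)
      (dist p1 p3 ^ 2) (dist p2 p3 ^ 2)).det = 0 := by
  have hdep : ¬ LinearIndependent ℝ ![p1 - p0, p2 - p0, p3 - p0] := fun h => by
    have := h.fintype_card_le_finrank
    simp only [Fintype.card_fin] at this
    omega
  rw [← Matrix.det_gram_ne_zero_iff_linearIndependent, not_not] at hdep
  rw [sqDistGram_dist_sq, Matrix.det_smul, hdep, mul_zero]

theorem natDegree_minpoly_le_six_of_dist_eq_add [FiniteDimensional ℝ E] (hE : finrank ℝ E ≤ 2)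
    {s : ℝ} {p0 p1 p2 p3 : E} {q01 q02 q03 q12 q13 q23 : ℚ}
    (h01 : dist p0 p1 = q01 + s) (h02 : dist p0 p2 = q02 + s) (h03 : dist p0 p3 = q03 + s)
    (h12 : dist p1 p2 = q12 + s) (h13 : dist p1 p3 = q13 + s) (h23 : dist p2 p3 = q23 + s) :
    (minpoly ℚ s).natDegree ≤ 6 := by
  have hdeg := natDegree_det_sqDistGram_C_add_X_sq q01 q02 q03 q12 q13 q23
  have hroot : aeval s (sqDistGram ((C q01 + X) ^ 2) ((C q02 + X) ^ 2) ((C q03 + X) ^ 2)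
      ((C q12 + X) ^ 2) ((C q13 + X) ^ 2) ((C q23 + X) ^ 2)).det = 0 := by
    rw [map_det_sqDistGram]
    simpa [h01, h02, h03, h12, h13, h23] using det_sqDistGram_dist_sq_eq_zero hE p0 p1 p2 p3
  calc (minpoly ℚ s).natDegree
      ≤ _ := natDegree_minpoly_le_of_aeval_eq_zero (ne_zero_of_natDegree_gt (n := 0) (by omega))
        hroot
    _ = 6 := hdeg

end InnerProductSpace

theorem Set.encard_le_three_of_not_four_distinct {α : Type*} {A : Set α}
    (h : ∀ a ∈ A, ∀ b ∈ A, ∀ c ∈ A, ∀ d ∈ A,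
      a ≠ b → a ≠ c → a ≠ d → b ≠ c → b ≠ d → c ≠ d → False) :
    A.encard ≤ 3 := by
  by_contra! hA
  obtain ⟨t, htA, ht⟩ := Set.exists_subset_encard_eq (Order.add_one_le_of_lt hA)
  obtain ⟨a, b, c, d, hab, hac, had, hbc, hbd, hcd, rfl⟩ := Set.encard_eq_four.mp ht
  exact h a (htA (by simp)) b (htA (by simp)) c (htA (by simp)) d (htA (by simp))
    hab hac had hbc hbd hcd

theorem algebraic_degree_ge_nine_not_mem_Lambda_general (s : ℝ)
    (hdeg : 9 ≤ (minpoly ℚ s).natDegree) :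
    8 * s ^ 8 ∉ Lambda s ∧
      ∀ A : Set (EuclideanSpace ℝ (Fin 2)),
        (∀ a ∈ A, ∀ a' ∈ A, a ≠ a' → ∃ n : ℕ, dist a a' = (n : ℝ) + s) →
        A.Finite ∧ A.ncard ≤ 3 := by
  refine ⟨fun hmem => ?_, fun A hA => ?_⟩
  · obtain ⟨p, hp, hps⟩ := exists_natDegree_lt_aeval_eq_of_mem_Lambda hmem
    exact algebraMap_mul_pow_ne_aeval (x := s) (by omega) (by norm_num : (8 : ℚ) ≠ 0) hp
      (by simpa using hps.symm)
  · refine Set.encard_le_coe_iff_finite_ncard_le.mp (Set.encard_le_three_of_not_four_distinct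
      fun a ha b hb c hc d hd hab hac had hbc hbd hcd => ?_)
    obtain ⟨n01, h01⟩ := hA a ha b hb hab
    obtain ⟨n02, h02⟩ := hA a ha c hc hac
    obtain ⟨n03, h03⟩ := hA a ha d hd had
    obtain ⟨n12, h12⟩ := hA b hb c hc hbc
    obtain ⟨n13, h13⟩ := hA b hb d hd hbd
    obtain ⟨n23, h23⟩ := hA c hc d hd hcd
    have := natDegree_minpoly_le_six_of_dist_eq_add finrank_euclideanSpace_fin.le
      (q01 := n01) (q02 := n02) (q03 := n03) (q12 := n12) (q13 := n13) (q23 := n23)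
      (by exact_mod_cast h01) (by exact_mod_cast h02) (by exact_mod_cast h03)
      (by exact_mod_cast h12) (by exact_mod_cast h13) (by exact_mod_cast h23)
    omega

/-- If `s` is algebraic over `ℚ` of degree at least 9, then `8s⁸ ∉ Λ(s)`;
consequently any planar set whose distance set lies in `ℕ + s` has at most
3 elements. -/
theorem algebraic_degree_ge_nine_not_mem_Lambda (s : ℝ) (halg : IsAlgebraic ℚ s)
    (hdeg : 9 ≤ (minpoly ℚ s).natDegree) :
    8 * s ^ 8 ∉ Lambda s ∧
      ∀ A : Set (EuclideanSpace ℝ (Fin 2)),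
        (∀ a ∈ A, ∀ a' ∈ A, a ≠ a' → ∃ n : ℕ, dist a a' = (n : ℝ) + s) →
        A.Finite ∧ A.ncard ≤ 3 :=
  algebraic_degree_ge_nine_not_mem_Lambda_general s hdeg
end

section
/- Let s = p/q be a rational number written in lowest terms (p, q coprime integers, q ≥ 1). If 8s⁸ ∈ Λ(s), then q = 1 or q = 2; equivalently, every rational s that is neither an integer nor a half-integer satisfies 8s⁸ ∉ Λ(s). -/
theorem exists_eq_of_mem_Lambda_div {p q : ℤ} (hq : q ≠ 0)
    (h : 8 * ((p : ℝ) / q) ^ 8 ∈ Lambda ((p : ℝ) / q)) :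
    ∃ a b c : ℤ, 8 * p ^ 8 = q ^ 4 * a + 2 * q ^ 2 * b + 4 * q * c := by
  obtain ⟨n₀, n₁, n₂, n₃, n₄, n₅, n₆, n₇, hx⟩ := h
  refine ⟨n₀ * q ^ 4 + n₄ * p ^ 4, n₂ * p ^ 2 * q ^ 4 + n₅ * p ^ 5 * q + n₆ * p ^ 6,
    n₁ * p * q ^ 6 + n₃ * p ^ 3 * q ^ 4 + n₇ * p ^ 7, ?_⟩
  have hq' : (q : ℝ) ≠ 0 := Int.cast_ne_zero.mpr hq
  field_simp at hx
  rw [← Int.cast_inj (α := ℝ)]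
  push_cast
  linear_combination hx

theorem dvd_eight_mul_pow_of_mem_Lambda_div {p q d : ℤ} (hq : q ≠ 0)
    (h : 8 * ((p : ℝ) / q) ^ 8 ∈ Lambda ((p : ℝ) / q))
    (h₄ : d ∣ q ^ 4) (h₂ : d ∣ 2 * q ^ 2) (h₁ : d ∣ 4 * q) : d ∣ 8 * p ^ 8 := by
  obtain ⟨a, b, c, habc⟩ := exists_eq_of_mem_Lambda_div hq h
  rw [habc]
  exact dvd_add (dvd_add (h₄.mul_right a) (h₂.mul_right b)) (h₁.mul_right c)

theorem Int.eq_one_or_eq_two_of_dvd_eight {q : ℤ} (hq : 0 < q) (h8 : q ∣ 8) (h4 : ¬ 4 ∣ q) :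
    q = 1 ∨ q = 2 := by
  have := Int.le_of_dvd (by norm_num) h8
  interval_cases q <;> simp_all

/-- If `s = p/q` in lowest terms (with `q ≥ 1`) and `8s⁸ ∈ Λ(s)`, then `q = 1`
or `q = 2`: every rational that is neither an integer nor a half-integer
satisfies `8s⁸ ∉ Λ(s)`. -/
theorem rational_mem_Lambda_denom (p q : ℤ) (hq : 1 ≤ q) (hcop : IsCoprime p q)
    (h : 8 * ((p : ℝ) / (q : ℝ)) ^ 8 ∈ Lambda ((p : ℝ) / (q : ℝ))) :
    q = 1 ∨ q = 2 := by
  have hq0 : q ≠ 0 := by omega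
  have hq8 : q ∣ 8 := by
    have := dvd_eight_mul_pow_of_mem_Lambda_div hq0 h (dvd_pow_self q (by norm_num))
      (Dvd.intro (2 * q) (by ring)) (dvd_mul_left q 4)
    exact hcop.symm.pow_right.dvd_of_dvd_mul_right this
  refine Int.eq_one_or_eq_two_of_dvd_eight (by omega) hq8 ?_
  rintro ⟨r, rfl⟩
  have h16 : 8 * 2 ∣ 8 * p ^ 8 :=
    dvd_eight_mul_pow_of_mem_Lambda_div hq0 h ⟨16 * r ^ 4, by ring⟩ ⟨2 * r ^ 2, by ring⟩ ⟨r, by ring⟩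
  have hp : 2 ∣ p :=
    Int.Prime.dvd_pow' Nat.prime_two ((mul_dvd_mul_iff_left (by norm_num)).mp h16)
  have h2 := Int.isUnit_iff.mp (hcop.isUnit_of_dvd' hp ⟨2 * r, by ring⟩)
  norm_num at h2
end

section
/- Let c > 0, L > 0 and α > 0 satisfy α ≤ L/2 and 2α²/L ≤ 1/(100c). Then there do not exist three distinct points a, a', a'' ∈ ℝ² such that: (i) their pairwise Euclidean distances are all ≥ L; (ii) there is a unit vector e ∈ ℝ² with |⟨a − a', e⟩| ≤ α, |⟨a − a'', e⟩| ≤ α and |⟨a' − a'', e⟩| ≤ α (i.e. the three points lie in a strip of width α); and (iii) for each of the three pairwise distances d there exists an integer k with |c·d − k/2 − 1/8| ≤ 1/100. -/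
/-!
Measure each difference of the three points against the strip direction `e` and the orthogonal
direction. In the plane the orthogonal components are signed multiples of one line, so one of
them is the sum of the other two in absolute value; since the components along `e` are at most
`α` and the distances at least `L`, each distance exceeds its orthogonal component by at most
`α²/L`. Hence one of the points is nearly between the other two: the triangle inequality is
tight up to `2α²/L ≤ 1/(100c)`. After scaling by `c`, however, the defect `d₁ + d₂ - d₃` of
three quantized distances lies within `3/100` of `1/8 + ℤ/2`, so it cannot lie in `[0, 1/100]`.
-/

open scoped RealInnerProductSpace
open Module EuclideanSpace

def IsQuantized (x : ℝ) : Prop :=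
  ∃ k : ℤ, |x - (k : ℝ) / 2 - 1 / 8| ≤ 1 / 100

lemma IsQuantized.add_sub_notMem_Icc {x y z : ℝ} (hx : IsQuantized x) (hy : IsQuantized y)
    (hz : IsQuantized z) : x + y - z ∉ Set.Icc 0 (1 / 100) := by
  rintro ⟨h₀, h₁⟩
  obtain ⟨k₁, hk₁⟩ := hx
  obtain ⟨k₂, hk₂⟩ := hy
  obtain ⟨k₃, hk₃⟩ := hz
  rw [abs_le] at hk₁ hk₂ hk₃
  have hneg : ((k₁ + k₂ - k₃ : ℤ) : ℝ) < 0 := by push_cast; linarith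
  have hgt : (-1 : ℝ) < ((k₁ + k₂ - k₃ : ℤ) : ℝ) := by push_cast; linarith
  have : k₁ + k₂ - k₃ < 0 := by exact_mod_cast hneg
  have : -1 < k₁ + k₂ - k₃ := by exact_mod_cast hgt
  omega

lemma IsQuantized.one_div_lt_add_sub {c x y z : ℝ} (hc : 0 < c) (htri : z ≤ x + y)
    (hx : IsQuantized (c * x)) (hy : IsQuantized (c * y)) (hz : IsQuantized (c * z)) :
    1 / (100 * c) < x + y - z := by
  by_contra! h
  refine hx.add_sub_notMem_Icc hy hz ⟨by nlinarith, ?_⟩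
  calc c * x + c * y - c * z = c * (x + y - z) := by ring
    _ ≤ c * (1 / (100 * c)) := by gcongr
    _ = 1 / 100 := by field_simp

lemma abs_add_eq_add_abs_or (x y : ℝ) :
    |x + y| = |x| + |y| ∨ |x| = |x + y| + |y| ∨ |y| = |x + y| + |x| := by
  rcases abs_cases x with ⟨hx, -⟩ | ⟨hx, -⟩ <;> rcases abs_cases y with ⟨hy, -⟩ | ⟨hy, -⟩ <;>
    rcases abs_cases (x + y) with ⟨hxy, -⟩ | ⟨hxy, -⟩ <;> rw [hx, hy, hxy] <;> grind

lemma sub_div_le_abs_of_sq_eq_sq_add_sq {L α d u v : ℝ} (hL : 0 < L) (hd : L ≤ d)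
    (hsq : d ^ 2 = u ^ 2 + v ^ 2) (hv : |v| ≤ α) : d - α ^ 2 / L ≤ |u| := by
  have hv2 : v ^ 2 ≤ α ^ 2 := sq_le_sq' (abs_le.1 hv).1 (abs_le.1 hv).2
  have hu : |u| ≤ d := by nlinarith [sq_abs u, abs_nonneg u]
  have : L * (d - |u|) ≤ α ^ 2 := by nlinarith [sq_abs u, abs_nonneg u]
  rw [sub_le_comm, le_div_iff₀ hL]
  linarith

section Plane

variable {E : Type*} [NormedAddCommGroup E] [InnerProductSpace ℝ E] [Fact (finrank ℝ E = 2)]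

lemma Orientation.dist_sub_div_le_abs_areaForm (o : Orientation ℝ E (Fin 2)) {L α : ℝ}
    (hL : 0 < L) {e p q : E} (he : ‖e‖ = 1) (hpq : L ≤ dist p q) (hα : |⟪p - q, e⟫| ≤ α) :
    dist p q - α ^ 2 / L ≤ |o.areaForm e (p - q)| := by
  refine sub_div_le_abs_of_sq_eq_sq_add_sq (v := ⟪e, p - q⟫) hL hpq ?_ (by rwa [real_inner_comm])
  rw [dist_eq_norm, ← one_mul (‖p - q‖ ^ 2), ← one_pow 2, ← he, ← o.inner_sq_add_areaForm_sq]
  ring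

lemma dist_add_dist_le_add_of_abs_inner_le {L α : ℝ} (hL : 0 < L) {a a' a'' e : E}
    (he : ‖e‖ = 1) (h₁ : L ≤ dist a a') (h₂ : L ≤ dist a a'') (h₃ : L ≤ dist a' a'')
    (hα₁ : |⟪a - a', e⟫| ≤ α) (hα₂ : |⟪a - a'', e⟫| ≤ α) (hα₃ : |⟪a' - a'', e⟫| ≤ α) :
    dist a a' + dist a' a'' ≤ dist a a'' + 2 * α ^ 2 / L ∨
      dist a a'' + dist a' a'' ≤ dist a a' + 2 * α ^ 2 / L ∨
      dist a a' + dist a a'' ≤ dist a' a'' + 2 * α ^ 2 / L := by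
  have : FiniteDimensional ℝ E := .of_fact_finrank_eq_two
  -- For any orientation, `o.areaForm e p` is the signed component of `p` orthogonal to `e`.
  let o : Orientation ℝ E (Fin 2) := (finBasisOfFinrankEq ℝ E Fact.out).orientation
  have hsum : o.areaForm e (a - a'') = o.areaForm e (a - a') + o.areaForm e (a' - a'') := by
    rw [← map_add, sub_add_sub_cancel]
  have hb₁ := o.dist_sub_div_le_abs_areaForm hL he h₁ hα₁
  have hb₂ := o.dist_sub_div_le_abs_areaForm hL he h₂ hα₂
  have hb₃ := o.dist_sub_div_le_abs_areaForm hL he h₃ hα₃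
  have hu (p q : E) : |o.areaForm e (p - q)| ≤ dist p q := by
    simpa [he, dist_eq_norm] using o.abs_areaForm_le e (p - q)
  have hu₁ := hu a a'
  have hu₂ := hu a a''
  have hu₃ := hu a' a''
  rw [hsum] at hb₂ hu₂
  have hdiv : 2 * α ^ 2 / L = 2 * (α ^ 2 / L) := mul_div_assoc _ _ _
  rcases abs_add_eq_add_abs_or (o.areaForm e (a - a')) (o.areaForm e (a' - a'')) with h | h | h
  · left; linarith
  · right; left; linarith
  · right; right; linarith

end Plane

theorem no_three_quantized_points_in_strip_general (c L α : ℝ) (hc : 0 < c) (hL : 0 < L)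
    (hα2 : 2 * α ^ 2 / L ≤ 1 / (100 * c)) :
    ¬ ∃ a a' a'' : EuclideanSpace ℝ (Fin 2),
      a ≠ a' ∧ a ≠ a'' ∧ a' ≠ a'' ∧
      (L ≤ dist a a' ∧ L ≤ dist a a'' ∧ L ≤ dist a' a'') ∧
      (∃ e : EuclideanSpace ℝ (Fin 2), ‖e‖ = 1 ∧
        |⟪a - a', e⟫| ≤ α ∧ |⟪a - a'', e⟫| ≤ α ∧ |⟪a' - a'', e⟫| ≤ α) ∧
      (∃ k : ℤ, |c * dist a a' - (k : ℝ) / 2 - 1 / 8| ≤ 1 / 100) ∧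
      (∃ k : ℤ, |c * dist a a'' - (k : ℝ) / 2 - 1 / 8| ≤ 1 / 100) ∧
      (∃ k : ℤ, |c * dist a' a'' - (k : ℝ) / 2 - 1 / 8| ≤ 1 / 100) := by
  rintro ⟨a, a', a'', -, -, -, ⟨h₁, h₂, h₃⟩, ⟨e, he, hα₁, hα₂, hα₃⟩, q₁, q₂, q₃⟩
  rcases dist_add_dist_le_add_of_abs_inner_le hL he h₁ h₂ h₃ hα₁ hα₂ hα₃ with h | h | h
  · linarith [IsQuantized.one_div_lt_add_sub hc (dist_triangle a a' a'') q₁ q₃ q₂]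
  · linarith [IsQuantized.one_div_lt_add_sub hc (dist_triangle_right a a' a'') q₂ q₃ q₁]
  · linarith [IsQuantized.one_div_lt_add_sub hc (dist_triangle_left a' a'' a) q₁ q₂ q₃]

/-- **At most two quantized points in a thin strip.**
Let `c > 0`, `L > 0`, `α > 0` with `α ≤ L/2` and `2α²/L ≤ 1/(100c)`. Then no
three distinct points of `ℝ²` can simultaneously have pairwise distances `≥ L`,
lie in a strip of width `α`, and have all three pairwise distances `d`
quantized as `|c·d − k/2 − 1/8| ≤ 1/100` for integers `k`. -/
theorem no_three_quantized_points_in_strip (c L α : ℝ) (hc : 0 < c) (hL : 0 < L)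
    (hα : 0 < α) (hαL : α ≤ L / 2) (hα2 : 2 * α ^ 2 / L ≤ 1 / (100 * c)) :
    ¬ ∃ a a' a'' : EuclideanSpace ℝ (Fin 2),
      a ≠ a' ∧ a ≠ a'' ∧ a' ≠ a'' ∧
      (L ≤ dist a a' ∧ L ≤ dist a a'' ∧ L ≤ dist a' a'') ∧
      (∃ e : EuclideanSpace ℝ (Fin 2), ‖e‖ = 1 ∧
        |⟪a - a', e⟫| ≤ α ∧ |⟪a - a'', e⟫| ≤ α ∧ |⟪a' - a'', e⟫| ≤ α) ∧
      (∃ k : ℤ, |c * dist a a' - (k : ℝ) / 2 - 1 / 8| ≤ 1 / 100) ∧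
      (∃ k : ℤ, |c * dist a a'' - (k : ℝ) / 2 - 1 / 8| ≤ 1 / 100) ∧
      (∃ k : ℤ, |c * dist a' a'' - (k : ℝ) / 2 - 1 / 8| ≤ 1 / 100) :=
  no_three_quantized_points_in_strip_general c L α hc hL hα2
end

section
/- Let d ≥ 2 and let A ⊆ ℝ^d be an infinite set whose distance set satisfies Δ(A) ⊆ ℤ⁺ (all pairwise distances between distinct points of A are positive integers). Then A is contained in a line. -/
/-!
Fix `a ∈ A`. Being infinite and `1`-separated, `A` is unbounded; along an ultrafilter of
points `x ∈ A` escaping to infinity the unit vectors `(x - a) / ‖x - a‖` converge to some `u`,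
and for each `p ∈ A` the bounded integer `‖x - a‖ - ‖x - p‖` is eventually constant, necessarily
equal to `⟪u, p - a⟫`. Expanding `‖x - p‖²` gives an exact relation between the components
`x⊥`, `p⊥` of `x - a`, `p - a` orthogonal to `u`:
`⟪x⊥, p⊥⟫ = ⟪u, p - a⟫ δ + ‖p⊥‖² / 2`, where `δ = ‖x - a‖ - ⟪u, x - a⟫` is a nonnegative
integer. If `δ` is eventually `0`, then `x⊥ = 0`, hence every `p⊥ = 0` and `A` lies on the line
`a + ℝ u`. Otherwise `δ ≥ 1` eventually, so `‖x⊥‖⁻¹ ≤ δ / ‖x⊥‖ = o(1)`, and any limit `w` of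
`x⊥ / ‖x⊥‖` is orthogonal to every `p⊥`, in particular to the `x⊥` themselves, which forces
`w = 0`: absurd.
-/

open Filter Topology Metric RealInnerProductSpace

def HasIntegralDistances {X : Type*} [PseudoMetricSpace X] (A : Set X) : Prop :=
  ∀ a ∈ A, ∀ b ∈ A, ∃ k : ℤ, dist a b = k

namespace HasIntegralDistances

variable {X : Type*} [MetricSpace X] {A : Set X}

theorem one_le_dist (hA : HasIntegralDistances A) {a b : X} (ha : a ∈ A) (hb : b ∈ A)
    (hab : a ≠ b) : 1 ≤ dist a b := by
  obtain ⟨k, hk⟩ := hA a ha b hb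
  have hpos : (0 : ℝ) < k := hk ▸ dist_pos.mpr hab
  rw [hk]
  exact_mod_cast (Int.cast_pos.mp hpos : 0 < k)

theorem isClosed (hA : HasIntegralDistances A) : IsClosed A :=
  isClosed_of_pairwise_le_dist one_pos fun _ ha _ hb hab => hA.one_le_dist ha hb hab

theorem isDiscrete (hA : HasIntegralDistances A) : IsDiscrete A := by
  refine isDiscrete_iff_forall_mem_exists_isOpen.mpr fun a ha => ⟨ball a 1, isOpen_ball, ?_⟩
  refine Set.eq_singleton_iff_unique_mem.mpr ⟨⟨mem_ball_self one_pos, ha⟩, ?_⟩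
  rintro b ⟨hb1, hb⟩
  by_contra hba
  exact (hA.one_le_dist hb ha hba).not_gt (mem_ball.mp hb1)

theorem tendsto_dist_cofinite_atTop [ProperSpace X] (hA : HasIntegralDistances A) (a : X) :
    Tendsto (fun p : A => dist (p : X) a) cofinite atTop :=
  (tendsto_dist_right_cocompact_atTop a).comp
    (hA.isClosed.tendsto_coe_cofinite_of_isDiscrete hA.isDiscrete)

theorem exists_eventually_dist_sub_dist_eq (hA : HasIntegralDistances A) {ι : Type*}
    (l : Ultrafilter ι) {x : ι → X} (hx : ∀ i, x i ∈ A) {a p : X} (ha : a ∈ A) (hp : p ∈ A) :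
    ∃ k : ℤ, ∀ᶠ i in l, dist (x i) a - dist (x i) p = k := by
  set N : ℤ := ⌈dist a p⌉
  have hmem : ∀ i, dist (x i) a - dist (x i) p ∈ ((↑) : ℤ → ℝ) '' Set.Icc (-N) N := by
    intro i
    obtain ⟨m, hm⟩ := hA _ (hx i) a ha
    obtain ⟨n, hn⟩ := hA _ (hx i) p hp
    have hbound : |((m - n : ℤ) : ℝ)| ≤ N := by
      push_cast
      rw [← hm, ← hn, dist_comm (x i) a, dist_comm (x i) p]
      exact (abs_dist_sub_le a p (x i)).trans (Int.le_ceil _)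
    refine ⟨m - n, Set.mem_Icc.mpr ?_, by push_cast; rw [hm, hn]⟩
    exact_mod_cast abs_le.mp hbound
  obtain ⟨r, ⟨k, -, rfl⟩, hr⟩ := Ultrafilter.eq_pure_of_finite_mem
    ((Set.finite_Icc (-N) N).image _) (Ultrafilter.mem_map.mpr (Eventually.of_forall hmem))
  refine ⟨k, ?_⟩
  have : {(k : ℝ)} ∈ l.map fun i => dist (x i) a - dist (x i) p := by
    rw [hr]; exact Ultrafilter.mem_pure.mpr rfl
  exact Ultrafilter.mem_map.mp this

end HasIntegralDistances

section InnerProduct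

variable {E : Type*} [NormedAddCommGroup E] [InnerProductSpace ℝ E]

def orthComponent (u z : E) : E := z - ⟪u, z⟫ • u

theorem inner_eq_of_norm_sub_norm_sub_eq {y q : E} {L : ℝ} (h : ‖y‖ - ‖y - q‖ = L) :
    ⟪y, q⟫ = L * ‖y‖ + (‖q‖ ^ 2 - L ^ 2) / 2 := by
  have hyq : ‖y - q‖ = ‖y‖ - L := by linarith
  have := norm_sub_sq_real y q
  rw [hyq] at this
  linear_combination this / 2

variable {u : E}

theorem inner_orthComponent (hu : ‖u‖ = 1) (y q : E) :
    ⟪orthComponent u y, orthComponent u q⟫ = ⟪y, q⟫ - ⟪u, y⟫ * ⟪u, q⟫ := by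
  have huu : ⟪u, u⟫ = 1 := by rw [real_inner_self_eq_norm_sq, hu, one_pow]
  simp only [orthComponent, inner_sub_left, inner_sub_right, real_inner_smul_left,
    real_inner_smul_right, huu, real_inner_comm y u]
  ring

theorem norm_orthComponent_sq (hu : ‖u‖ = 1) (y : E) :
    ‖orthComponent u y‖ ^ 2 = ‖y‖ ^ 2 - ⟪u, y⟫ ^ 2 := by
  rw [← real_inner_self_eq_norm_sq, inner_orthComponent hu, real_inner_self_eq_norm_sq]
  ring

theorem inner_orthComponent_of_norm_sub_norm_sub_eq (hu : ‖u‖ = 1) {y q : E}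
    (h : ‖y‖ - ‖y - q‖ = ⟪u, q⟫) :
    ⟪orthComponent u y, orthComponent u q⟫ =
      ⟪u, q⟫ * (‖y‖ - ⟪u, y⟫) + ‖orthComponent u q‖ ^ 2 / 2 := by
  rw [inner_orthComponent hu, inner_eq_of_norm_sub_norm_sub_eq h, norm_orthComponent_sq hu]
  ring

theorem inner_le_norm_of_norm_eq_one (hu : ‖u‖ = 1) (y : E) : ⟪u, y⟫ ≤ ‖y‖ := by
  simpa [hu] using real_inner_le_norm u y

variable {ι : Type*} {l : Filter ι} {y : ι → E}

theorem exists_norm_eq_one_tendsto_normalize [ProperSpace E] {l : Ultrafilter ι}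
    (hy : ∀ᶠ i in l, y i ≠ 0) :
    ∃ u : E, ‖u‖ = 1 ∧ Tendsto (fun i => ‖y i‖⁻¹ • y i) l (𝓝 u) := by
  have hsphere : ∀ᶠ i in l, ‖y i‖⁻¹ • y i ∈ sphere (0 : E) 1 :=
    hy.mono fun i hi => mem_sphere_zero_iff_norm.mpr (norm_smul_inv_norm hi)
  obtain ⟨u, hu, hlim⟩ := (isCompact_sphere (0 : E) 1).ultrafilter_le_nhds
    (l.map fun i => ‖y i‖⁻¹ • y i) (le_principal_iff.mpr (Ultrafilter.mem_map.mpr hsphere))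
  exact ⟨u, mem_sphere_zero_iff_norm.mp hu, hlim⟩

theorem inner_eq_of_eventually_norm_sub_norm_sub_eq [l.NeBot]
    (hfar : Tendsto (fun i => ‖y i‖) l atTop)
    (hdir : Tendsto (fun i => ‖y i‖⁻¹ • y i) l (𝓝 u)) {q : E} {L : ℝ}
    (h : ∀ᶠ i in l, ‖y i‖ - ‖y i - q‖ = L) : ⟪u, q⟫ = L := by
  have hexpand : ∀ᶠ i in l, ⟪‖y i‖⁻¹ • y i, q⟫ = L + (‖q‖ ^ 2 - L ^ 2) / 2 * ‖y i‖⁻¹ := by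
    filter_upwards [h, hfar.eventually_gt_atTop 0] with i hi hpos
    rw [real_inner_smul_left, inner_eq_of_norm_sub_norm_sub_eq hi]
    field_simp
  have hlim : Tendsto (fun i => L + (‖q‖ ^ 2 - L ^ 2) / 2 * ‖y i‖⁻¹) l (𝓝 L) := by
    simpa using tendsto_const_nhds.add (tendsto_const_nhds.mul hfar.inv_tendsto_atTop)
  exact tendsto_nhds_unique (hdir.inner tendsto_const_nhds)
    (hlim.congr' (hexpand.mono fun _ hi => hi.symm))

theorem tendsto_norm_orthComponent_div_norm (hu : ‖u‖ = 1)
    (hdir : Tendsto (fun i => ‖y i‖⁻¹ • y i) l (𝓝 u)) :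
    Tendsto (fun i => ‖orthComponent u (y i)‖ / ‖y i‖) l (𝓝 0) := by
  have hscale : ∀ z : E, ‖orthComponent u z‖ / ‖z‖ = ‖orthComponent u (‖z‖⁻¹ • z)‖ := by
    intro z
    rw [orthComponent, orthComponent, real_inner_smul_right, mul_smul, ← smul_sub, norm_smul,
      norm_inv, norm_norm, div_eq_inv_mul]
  have hlim : Tendsto (fun z => ‖orthComponent u z‖) (𝓝 u) (𝓝 ‖orthComponent u u‖) :=
    ((continuous_id.sub ((continuous_const.inner continuous_id).smul
      continuous_const)).norm).tendsto u
  have hu0 : orthComponent u u = 0 := by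
    rw [orthComponent, real_inner_self_eq_norm_sq, hu, one_pow, one_smul, sub_self]
  rw [hu0, norm_zero] at hlim
  exact (hlim.comp hdir).congr fun i => (hscale (y i)).symm

theorem eventually_inner_pos (hu : ‖u‖ = 1) (hdir : Tendsto (fun i => ‖y i‖⁻¹ • y i) l (𝓝 u)) :
    ∀ᶠ i in l, 0 < ⟪u, y i⟫ := by
  have hlim : Tendsto (fun i => ⟪u, ‖y i‖⁻¹ • y i⟫) l (𝓝 ⟪u, u⟫) :=
    tendsto_const_nhds.inner hdir
  rw [real_inner_self_eq_norm_sq, hu, one_pow] at hlim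
  filter_upwards [hlim.eventually (lt_mem_nhds one_pos)] with i hi
  rw [real_inner_smul_right] at hi
  exact pos_of_mul_pos_right hi (inv_nonneg.mpr (norm_nonneg _))

theorem tendsto_norm_sub_inner_div_norm_orthComponent (hu : ‖u‖ = 1)
    (hdir : Tendsto (fun i => ‖y i‖⁻¹ • y i) l (𝓝 u)) :
    Tendsto (fun i => (‖y i‖ - ⟪u, y i⟫) / ‖orthComponent u (y i)‖) l (𝓝 0) := by
  refine squeeze_zero' (Eventually.of_forall fun i => div_nonneg
    (sub_nonneg.mpr (inner_le_norm_of_norm_eq_one hu _)) (norm_nonneg _)) ?_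
    (tendsto_norm_orthComponent_div_norm hu hdir)
  filter_upwards [eventually_inner_pos hu hdir] with i hpos
  have hle := inner_le_norm_of_norm_eq_one hu (y i)
  rcases (norm_nonneg (orthComponent u (y i))).eq_or_lt with h0 | hv
  · rw [← h0, div_zero, zero_div]
  · rw [div_le_div_iff₀ hv (hpos.trans_le hle), ← sq, norm_orthComponent_sq hu]
    -- `‖y⊥‖² = δ (‖y‖ + ⟪u, y⟫) ≥ δ ‖y‖` because `⟪u, y⟫ > 0`
    nlinarith

theorem orthComponent_eq_zero_of_norm_eq_inner (hu : ‖u‖ = 1) {y q : E} (hy : ‖y‖ = ⟪u, y⟫)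
    (hq : ‖y‖ - ‖y - q‖ = ⟪u, q⟫) : orthComponent u q = 0 := by
  have hvy : orthComponent u y = 0 := by
    rw [← norm_eq_zero, ← sq_eq_zero_iff, norm_orthComponent_sq hu, hy, sub_self]
  have h := inner_orthComponent_of_norm_sub_norm_sub_eq hu hq
  rw [hvy, inner_zero_left, hy, sub_self, mul_zero, zero_add] at h
  rw [← norm_eq_zero, ← sq_eq_zero_iff]
  linarith

theorem inner_orthComponent_eq_zero_of_tendsto [l.NeBot] (hu : ‖u‖ = 1)
    (hdir : Tendsto (fun i => ‖y i‖⁻¹ • y i) l (𝓝 u))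
    (hδ : ∀ᶠ i in l, 1 ≤ ‖y i‖ - ⟪u, y i⟫) {w : E}
    (hw : Tendsto (fun i => ‖orthComponent u (y i)‖⁻¹ • orthComponent u (y i)) l (𝓝 w))
    {q : E} (hq : ∀ᶠ i in l, ‖y i‖ - ‖y i - q‖ = ⟪u, q⟫) :
    ⟪w, orthComponent u q⟫ = 0 := by
  set v := fun i => orthComponent u (y i)
  set δ := fun i => ‖y i‖ - ⟪u, y i⟫
  have hratio : Tendsto (fun i => δ i / ‖v i‖) l (𝓝 0) :=
    tendsto_norm_sub_inner_div_norm_orthComponent hu hdir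
  have hinv : Tendsto (fun i => ‖v i‖⁻¹) l (𝓝 0) :=
    squeeze_zero' (Eventually.of_forall fun i => inv_nonneg.mpr (norm_nonneg _))
      (hδ.mono fun i hi => by
        rw [inv_eq_one_div]; exact div_le_div_of_nonneg_right hi (norm_nonneg _)) hratio
  have hexpand : ∀ᶠ i in l, ⟪‖v i‖⁻¹ • v i, orthComponent u q⟫ =
      ⟪u, q⟫ * (δ i / ‖v i‖) + ‖orthComponent u q‖ ^ 2 / 2 * ‖v i‖⁻¹ := by
    filter_upwards [hq] with i hi
    rw [real_inner_smul_left, inner_orthComponent_of_norm_sub_norm_sub_eq hu hi]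
    ring
  have hlim : Tendsto (fun i => ⟪u, q⟫ * (δ i / ‖v i‖) + ‖orthComponent u q‖ ^ 2 / 2 * ‖v i‖⁻¹)
      l (𝓝 0) := by
    simpa using (tendsto_const_nhds.mul hratio).add (tendsto_const_nhds.mul hinv)
  exact tendsto_nhds_unique (hw.inner tendsto_const_nhds)
    (hlim.congr' (hexpand.mono fun _ hi => hi.symm))

theorem not_eventually_one_le_norm_sub_inner [ProperSpace E] {l : Ultrafilter ι} {Q : Set E}
    (hu : ‖u‖ = 1) (hdir : Tendsto (fun i => ‖y i‖⁻¹ • y i) l (𝓝 u)) (hyQ : ∀ i, y i ∈ Q)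
    (hlevel : ∀ q ∈ Q, ∀ᶠ i in l, ‖y i‖ - ‖y i - q‖ = ⟪u, q⟫) :
    ¬∀ᶠ i in l, 1 ≤ ‖y i‖ - ⟪u, y i⟫ := by
  intro hδ
  have hv : ∀ᶠ i in l, orthComponent u (y i) ≠ 0 := by
    filter_upwards [hδ, eventually_inner_pos hu hdir] with i hδi hpos h0
    have := norm_orthComponent_sq hu (y i)
    rw [h0, norm_zero] at this
    nlinarith
  obtain ⟨w, hw1, hw⟩ := exists_norm_eq_one_tendsto_normalize hv
  have horth : ∀ q ∈ Q, ⟪w, orthComponent u q⟫ = 0 := fun q hq =>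
    inner_orthComponent_eq_zero_of_tendsto hu hdir hδ hw (hlevel q hq)
  have hww : ⟪w, w⟫ = 0 := tendsto_nhds_unique (tendsto_const_nhds.inner hw)
    (tendsto_const_nhds.congr fun i => by rw [real_inner_smul_right, horth _ (hyQ i), mul_zero])
  rw [real_inner_self_eq_norm_sq, hw1] at hww
  norm_num at hww

theorem orthComponent_eq_zero_of_eventually_norm_sub_norm_sub_eq [ProperSpace E]
    {l : Ultrafilter ι} {Q : Set E}
    (hu : ‖u‖ = 1) (hdir : Tendsto (fun i => ‖y i‖⁻¹ • y i) l (𝓝 u)) (hyQ : ∀ i, y i ∈ Q)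
    (hlevel : ∀ q ∈ Q, ∀ᶠ i in l, ‖y i‖ - ‖y i - q‖ = ⟪u, q⟫)
    (hint : ∀ i, ∃ k : ℤ, ‖y i‖ - ⟪u, y i⟫ = k) {q : E} (hq : q ∈ Q) :
    orthComponent u q = 0 := by
  rcases l.em (fun i => ‖y i‖ = ⟪u, y i⟫) with hδ | hδ
  · obtain ⟨i, hδi, hqi⟩ := (hδ.and (hlevel q hq)).exists
    exact orthComponent_eq_zero_of_norm_eq_inner hu hδi hqi
  · refine absurd ?_ (not_eventually_one_le_norm_sub_inner hu hdir hyQ hlevel)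
    filter_upwards [hδ] with i hi
    obtain ⟨k, hk⟩ := hint i
    have hnonneg := sub_nonneg.mpr (inner_le_norm_of_norm_eq_one hu (y i))
    rw [hk] at hnonneg ⊢
    have hk0 : k ≠ 0 := by
      rintro rfl
      exact hi (sub_eq_zero.mp (by exact_mod_cast hk))
    have : 0 ≤ k := by exact_mod_cast hnonneg
    exact_mod_cast (show 1 ≤ k by omega)

end InnerProduct

theorem HasIntegralDistances.collinear {E : Type*} [NormedAddCommGroup E]
    [InnerProductSpace ℝ E] [ProperSpace E] {A : Set E} (hA : HasIntegralDistances A)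
    (hinf : A.Infinite) :
    Collinear ℝ A := by
  obtain ⟨a, ha⟩ := hinf.nonempty
  have : Infinite A := hinf.to_subtype
  set l : Ultrafilter A := hyperfilter A
  set y : A → E := fun p => (p : E) - a
  have hfar : Tendsto (fun p => ‖y p‖) l atTop := by
    simpa only [y, ← dist_eq_norm] using
      (hA.tendsto_dist_cofinite_atTop a).mono_left hyperfilter_le_cofinite
  obtain ⟨u, hu, hdir⟩ := exists_norm_eq_one_tendsto_normalize (l := l)
    ((hfar.eventually_gt_atTop 0).mono fun _ => norm_pos_iff.mp)
  have hlevel : ∀ p ∈ A, ∃ k : ℤ, ⟪u, p - a⟫ = k ∧ ∀ᶠ i in l, ‖y i‖ - ‖y i - (p - a)‖ = k := by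
    intro p hp
    obtain ⟨k, hk⟩ := hA.exists_eventually_dist_sub_dist_eq l (fun i => i.2) ha hp
    have hk' : ∀ᶠ i in l, ‖y i‖ - ‖y i - (p - a)‖ = k := by
      simpa only [y, sub_sub_sub_cancel_right, dist_eq_norm] using hk
    exact ⟨k, inner_eq_of_eventually_norm_sub_norm_sub_eq hfar hdir hk', hk'⟩
  have hint : ∀ i, ∃ k : ℤ, ‖y i‖ - ⟪u, y i⟫ = k := by
    intro i
    obtain ⟨m, hm⟩ := hA i i.2 a ha
    obtain ⟨k, hk, -⟩ := hlevel i i.2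
    exact ⟨m - k, by rw [← dist_eq_norm, hm, hk]; push_cast; ring⟩
  rw [collinear_iff_of_mem ha]
  refine ⟨u, fun p hp => ⟨⟪u, p - a⟫, ?_⟩⟩
  have hq := orthComponent_eq_zero_of_eventually_norm_sub_norm_sub_eq (Q := (· - a) '' A)
    hu hdir (fun i => ⟨i, i.2, rfl⟩)
    (by rintro _ ⟨p, hp, rfl⟩; obtain ⟨k, hk, hev⟩ := hlevel p hp; rw [hk]; exact hev)
    hint ⟨p, hp, rfl⟩
  rw [orthComponent, sub_eq_zero] at hq
  rw [vadd_eq_add, ← hq, sub_add_cancel]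

theorem anning_erdos_general (d : ℕ) (A : Set (EuclideanSpace ℝ (Fin d)))
    (hinf : A.Infinite)
    (hA : ∀ a ∈ A, ∀ a' ∈ A, a ≠ a' → ∃ n : ℕ, 0 < n ∧ dist a a' = (n : ℝ)) :
    Collinear ℝ A := by
  refine HasIntegralDistances.collinear (fun a ha b hb => ?_) hinf
  rcases eq_or_ne a b with rfl | hab
  · exact ⟨0, by simp⟩
  · obtain ⟨n, -, hn⟩ := hA a ha b hb hab
    exact ⟨n, by simpa using hn⟩

/-- **Anning–Erdős theorem.**
For `d ≥ 2`, an infinite set `A ⊆ ℝᵈ` all of whose pairwise distances are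
positive integers is contained in a line. -/
theorem anning_erdos (d : ℕ) (hd : 2 ≤ d) (A : Set (EuclideanSpace ℝ (Fin d)))
    (hinf : A.Infinite)
    (hA : ∀ a ∈ A, ∀ a' ∈ A, a ≠ a' → ∃ n : ℕ, 0 < n ∧ dist a a' = (n : ℝ)) :
    Collinear ℝ A :=
  anning_erdos_general d A hinf hA
end
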